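/- arXiv:2603.19647 — 3 statements merged into one kernel-verified Lean document; each statement's English description precedes it below -/
import Mathlib

section
/- Let Ã be a real N × N matrix, R and B real N × m matrices with Ã R = B, and suppose R = U S Vᵀ exactly, where U is a real N × r matrix with orthonormal columns (Uᵀ U = I_r), S is an invertible real r × r matrix, and V is a real m × r matrix with orthonormal columns (Vᵀ V = I_r). Set A_r := Uᵀ B V S⁻¹ and assume A_r is invertible. If ρ ∈ ℝ^N satisfies Ã ρ = b̃ and ρ lies in the column span of U, then the DMD-ROM initial guess U c, where c solves A_r c = Uᵀ b̃, equals ρ exactly. -/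
open Matrix BigOperators

/-- DMD-ROM exactness: if `Ã R = B`, `R = U S Vᵀ` exactly with orthonormal `U`- and
`V`-columns and invertible `S`, the DMD reduced operator `A_r = Uᵀ B V S⁻¹` is invertible,
`Ã ρ = b̃`, and `ρ` lies in the column span of `U`, then the DMD-ROM initial guess `U c`,
where `A_r c = Uᵀ b̃`, equals `ρ` exactly. -/
theorem dmd_rom_initial_guess_exact
    (N m r : ℕ)
    (Atilde : Matrix (Fin N) (Fin N) ℝ)
    (R B : Matrix (Fin N) (Fin m) ℝ)
    (hAR : Atilde * R = B)
    (U : Matrix (Fin N) (Fin r) ℝ) (hU : Uᵀ * U = 1)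
    (S : Matrix (Fin r) (Fin r) ℝ) (hS : IsUnit S)
    (V : Matrix (Fin m) (Fin r) ℝ) (hV : Vᵀ * V = 1)
    (hR : R = U * S * Vᵀ)
    (Ar : Matrix (Fin r) (Fin r) ℝ)
    (hAr : Ar = Uᵀ * B * V * S⁻¹)
    (hArInv : IsUnit Ar)
    (ρ btilde : Fin N → ℝ)
    (hρ : Atilde.mulVec ρ = btilde)
    (cstar : Fin r → ℝ)
    (hspan : ρ = U.mulVec cstar)
    (c : Fin r → ℝ)
    (hc : Ar.mulVec c = Uᵀ.mulVec btilde) :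
    U.mulVec c = ρ := by
  have hSdet : IsUnit S.det := (Matrix.isUnit_iff_isUnit_det S).mp hS
  have hArA : Ar = Uᵀ * Atilde * U := by
    rw [hAr, ← hAR, hR]
    calc Uᵀ * (Atilde * (U * S * Vᵀ)) * V * S⁻¹
        = Uᵀ * Atilde * U * (S * ((Vᵀ * V) * S⁻¹)) := by
          simp only [Matrix.mul_assoc]
      _ = Uᵀ * Atilde * U := by
          rw [hV, Matrix.one_mul, Matrix.mul_nonsing_inv S hSdet, Matrix.mul_one]
  have key : Ar.mulVec cstar = Ar.mulVec c := by
    rw [hc, ← hρ, hspan, hArA]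
    simp [Matrix.mulVec_mulVec, Matrix.mul_assoc]
  have hcc : cstar = c := by
    have := hArInv
    rw [Matrix.isUnit_iff_isUnit_det] at this
    have h1 : Ar⁻¹.mulVec (Ar.mulVec cstar) = Ar⁻¹.mulVec (Ar.mulVec c) := by rw [key]
    simpa [Matrix.mulVec_mulVec, Matrix.nonsing_inv_mul Ar this] using h1
  rw [← hcc, ← hspan]
end

section
/- Let U be a real n × r matrix with orthonormal columns (Uᵀ U = I_r), S a real r × r matrix, V a real m × r matrix, and R := U S Vᵀ. Let ρ ∈ ℝⁿ satisfy (I − U Uᵀ) ρ ≠ 0, and set s := ‖(I − U Uᵀ) ρ‖₂ and q := (1/s)(I − U Uᵀ) ρ. Then the augmented snapshot matrix factorizes exactly as [R ρ] = [U q] · K · W, where K is the (r+1) × (r+1) core matrix with blocks K = [[S, Uᵀρ],[0, s]], and W is the (r+1) × (m+1) matrix with blocks W = [[Vᵀ, 0],[0, 1]]. -/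
open Matrix BigOperators

/-- Key factorization of the incremental SVD update (Brand 2006): the augmented snapshot
matrix `[R ρ]` factorizes exactly as `[U q] * K * W` with core matrix
`K = [[S, Uᵀρ],[0, s]]` and `W = [[Vᵀ, 0],[0, 1]]`, where `R = U S Vᵀ`, `U` has
orthonormal columns, `p = (I - U Uᵀ) ρ ≠ 0`, `s = ‖p‖₂` and `q = p / s`. -/
theorem incremental_svd_core_factorization
    (n m r : ℕ)
    (U : Matrix (Fin n) (Fin r) ℝ) (hU : Uᵀ * U = 1)
    (S : Matrix (Fin r) (Fin r) ℝ)
    (V : Matrix (Fin m) (Fin r) ℝ)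
    (R : Matrix (Fin n) (Fin m) ℝ) (hR : R = U * S * Vᵀ)
    (ρ : Fin n → ℝ)
    (p : Fin n → ℝ) (hp : p = (1 - U * Uᵀ).mulVec ρ) (hp0 : p ≠ 0)
    (s : ℝ) (hs : s = Real.sqrt (∑ i, p i ^ 2))
    (q : Fin n → ℝ) (hq : q = s⁻¹ • p)
    (K : Matrix (Fin r ⊕ Fin 1) (Fin r ⊕ Fin 1) ℝ)
    (hK : K = Matrix.fromBlocks S (Matrix.of fun i (_ : Fin 1) => Uᵀ.mulVec ρ i)
      0 (Matrix.of fun (_ : Fin 1) (_ : Fin 1) => s))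
    (W : Matrix (Fin r ⊕ Fin 1) (Fin m ⊕ Fin 1) ℝ)
    (hW : W = Matrix.fromBlocks Vᵀ 0 0 1) :
    (Matrix.of fun i => Sum.elim (R i) (fun _ : Fin 1 => ρ i)) =
      (Matrix.of fun i => Sum.elim (U i) (fun _ : Fin 1 => q i)) * K * W := by
  have hs0 : s ≠ 0 := by
    rw [hs]
    obtain ⟨i, hi⟩ := Function.ne_iff.mp hp0
    have hpos : 0 < ∑ j, p j ^ 2 :=
      Finset.sum_pos' (fun j _ => sq_nonneg _) ⟨i, Finset.mem_univ i, pow_two_pos_of_ne_zero hi⟩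
    exact ne_of_gt (Real.sqrt_pos.mpr hpos)
  have hsq : ∀ i, s * q i = p i := by
    intro i; rw [hq]; simp [mul_inv_cancel_left₀ hs0, smul_smul, mul_inv_cancel₀ hs0]
  have hpe : ∀ i, p i = ρ i - ∑ k, U i k * (Uᵀ.mulVec ρ) k := by
    intro i
    simp [hp, mulVec, dotProduct, Matrix.sub_apply, Matrix.mul_apply, Matrix.one_apply,
      sub_mul, Finset.sum_sub_distrib, ite_mul, Finset.sum_mul, Finset.mul_sum, mul_assoc]
    rw [Finset.sum_comm]
  ext i j
  cases j with
  | inl j =>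
    simp [hK, hW, hR, Matrix.mul_apply, Fintype.sum_sum_type, Finset.sum_mul,
      Finset.mul_sum]
  | inr j =>
    have hj : j = 0 := Subsingleton.elim _ _
    simp [hK, hW, Matrix.mul_apply, Fintype.sum_sum_type, hj, Matrix.one_apply]
    rw [mul_comm (q i) s, hsq, hpe]
    ring
end

section
/- Let U be a real n × r matrix and V a real m × r matrix, both with orthonormal columns (Uᵀ U = Vᵀ V = I_r), S a real r × r matrix, and R := U S Vᵀ. Let ρ ∈ ℝⁿ satisfy (I − U Uᵀ) ρ ≠ 0; set s := ‖(I − U Uᵀ) ρ‖₂, q := (1/s)(I − U Uᵀ) ρ, and let K := [[S, Uᵀρ],[0, s]] be the (r+1) × (r+1) core matrix. Suppose K = U_c S_c V_cᵀ where U_c and V_c are orthogonal (r+1) × (r+1) matrices. Define Û := [U q] U_c and V̂ := [[V, 0],[0, 1]] V_c. Then Ûᵀ Û = I_{r+1}, V̂ᵀ V̂ = I_{r+1}, and [R ρ] = Û S_c V̂ᵀ; i.e., the incremental update produces an exact factorization with orthonormal left and right factors of the augmented snapshot matrix. -/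
open Matrix

/-!
The columns of `[U q]` are orthonormal because `q` is a unit vector in the orthogonal complement
of the column space of `U`, and `[[V,0],[0,1]]` has orthonormal columns; multiplying by
the orthogonal `U_c`, `V_c` preserves this. For the factorization, the core matrix is built so
that `[U q] K = [U S, ρ]`, as `U Uᵀ ρ + s q = U Uᵀ ρ + (I - U Uᵀ) ρ = ρ`; multiplying on the
right by `[[V,0],[0,1]]ᵀ` gives `[R ρ]`, and substituting `K = U_c S_c V_cᵀ` gives `Û S_c V̂ᵀ`.
-/

namespace Matrix

variable {α : Type*} [CommRing α] {l m n k : Type*}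

def HasOrthonormalCols [Fintype m] [DecidableEq n] (A : Matrix m n α) : Prop := Aᵀ * A = 1

theorem hasOrthonormalCols_one [Fintype n] [DecidableEq n] :
    HasOrthonormalCols (1 : Matrix n n α) := by
  simp [HasOrthonormalCols]

theorem HasOrthonormalCols.mul [Fintype m] [Fintype n] [DecidableEq n] [DecidableEq k]
    {A : Matrix m n α} {B : Matrix n k α} (hA : HasOrthonormalCols A)
    (hB : HasOrthonormalCols B) : HasOrthonormalCols (A * B) := by
  unfold HasOrthonormalCols at *
  rw [transpose_mul, Matrix.mul_assoc, ← Matrix.mul_assoc Aᵀ, hA, Matrix.one_mul, hB]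

theorem HasOrthonormalCols.fromCols [Fintype m] [DecidableEq n] [DecidableEq k]
    {A : Matrix m n α} {B : Matrix m k α} (hA : HasOrthonormalCols A)
    (hB : HasOrthonormalCols B) (hAB : Aᵀ * B = 0) : HasOrthonormalCols (fromCols A B) := by
  have hBA : Bᵀ * A = 0 := by
    simpa only [transpose_mul, transpose_transpose, transpose_zero] using congrArg transpose hAB
  unfold HasOrthonormalCols at *
  rw [transpose_fromCols, fromRows_mul_fromCols, hA, hB, hAB, hBA, fromBlocks_one]

theorem HasOrthonormalCols.fromBlocks [Fintype m] [Fintype l] [DecidableEq n] [DecidableEq k]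
    {A : Matrix m n α} {D : Matrix l k α} (hA : HasOrthonormalCols A)
    (hD : HasOrthonormalCols D) : HasOrthonormalCols (fromBlocks A 0 0 D) := by
  unfold HasOrthonormalCols at *
  simp [fromBlocks_transpose, fromBlocks_multiply, hA, hD]

theorem hasOrthonormalCols_replicateCol_iff [Fintype m] {ι : Type*} [Unique ι] [DecidableEq ι]
    {v : m → α} :
    HasOrthonormalCols (replicateCol ι v) ↔ v ⬝ᵥ v = 1 := by
  simp [HasOrthonormalCols, transpose_replicateCol, replicateRow_mul_replicateCol, ← ext_iff]

theorem HasOrthonormalCols.transpose_mul_one_sub_mul_transpose [Fintype m] [Fintype n]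
    [DecidableEq m] [DecidableEq n] {A : Matrix m n α} (hA : HasOrthonormalCols A) :
    Aᵀ * (1 - A * Aᵀ) = 0 := by
  rw [Matrix.mul_sub, Matrix.mul_one, ← Matrix.mul_assoc, hA, Matrix.one_mul, sub_self]

theorem fromCols_replicateCol_mul_fromBlocks_eq_fromCols {n' ι : Type*} [Fintype m] [Fintype n]
    [Fintype ι] [Unique ι] [DecidableEq m] (U : Matrix m n α) (S : Matrix n n' α)
    {ρ q : m → α} {s : α}
    (hq : s • q = (1 - U * Uᵀ) *ᵥ ρ) :
    fromCols U (replicateCol ι q) *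
        fromBlocks S (replicateCol ι (Uᵀ *ᵥ ρ)) 0 (of fun _ _ => s : Matrix ι ι α) =
      fromCols (U * S) (replicateCol ι ρ) := by
  have hρ : (U * Uᵀ) *ᵥ ρ + s • q = ρ := by
    rw [hq, sub_mulVec, one_mulVec, add_sub_cancel]
  rw [fromCols_mul_fromBlocks, Matrix.mul_zero, add_zero]
  congr 1
  have hcol : replicateCol ι q * (of fun _ _ => s : Matrix ι ι α) = replicateCol ι (s • q) := by
    ext i j
    simp [mul_apply, mul_comm]
  rw [hcol, ← replicateCol_mulVec, ← replicateCol_add, mulVec_mulVec, hρ]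

theorem fromCols_mul_fromBlocks_one_transpose {m₂ n' : Type*} [Fintype n] [Fintype m₂]
    [DecidableEq m₂] (A : Matrix m n α) (B : Matrix m m₂ α) (V : Matrix n' n α) :
    fromCols A B * (fromBlocks V 0 0 (1 : Matrix m₂ m₂ α))ᵀ = fromCols (A * Vᵀ) B := by
  simp [fromBlocks_transpose, fromCols_mul_fromBlocks]

theorem dotProduct_self_pos [Fintype m] {R : Type*} [Ring R] [LinearOrder R]
    [IsStrictOrderedRing R] {v : m → R} (hv : v ≠ 0) : 0 < v ⬝ᵥ v :=
  (Finset.sum_nonneg fun i _ => mul_self_nonneg (v i)).lt_of_ne'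
    (dotProduct_self_eq_zero.not.mpr hv)

theorem inv_sqrt_smul_dotProduct_self [Fintype m] {p : m → ℝ} (hp : p ≠ 0) :
    ((√(p ⬝ᵥ p))⁻¹ • p) ⬝ᵥ ((√(p ⬝ᵥ p))⁻¹ • p) = 1 := by
  have hpos := dotProduct_self_pos hp
  rw [smul_dotProduct, dotProduct_smul, smul_eq_mul, smul_eq_mul, ← mul_assoc, ← mul_inv,
    Real.mul_self_sqrt hpos.le, inv_mul_cancel₀ hpos.ne']

end Matrix

/-- Correctness of the incremental SVD update (Brand 2006): given `R = U S Vᵀ` with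
orthonormal `U`- and `V`-columns, `p = (I - U Uᵀ) ρ ≠ 0`, `s = ‖p‖₂`, `q = p / s`,
and an SVD `K = U_c S_c V_cᵀ` of the core matrix `K = [[S, Uᵀρ],[0, s]]` with
orthogonal `U_c`, `V_c`, the matrices `Û = [U q] U_c` and `V̂ = [[V,0],[0,1]] V_c`
have orthonormal columns and `[R ρ] = Û S_c V̂ᵀ`. -/
theorem incremental_svd_update_correct
    (n m r : ℕ)
    (U : Matrix (Fin n) (Fin r) ℝ) (hU : Uᵀ * U = 1)
    (V : Matrix (Fin m) (Fin r) ℝ) (hV : Vᵀ * V = 1)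
    (S : Matrix (Fin r) (Fin r) ℝ)
    (R : Matrix (Fin n) (Fin m) ℝ) (hR : R = U * S * Vᵀ)
    (ρ : Fin n → ℝ)
    (p : Fin n → ℝ) (hp : p = (1 - U * Uᵀ).mulVec ρ) (hp0 : p ≠ 0)
    (s : ℝ) (hs : s = Real.sqrt (∑ i, p i ^ 2))
    (q : Fin n → ℝ) (hq : q = s⁻¹ • p)
    (K : Matrix (Fin r ⊕ Fin 1) (Fin r ⊕ Fin 1) ℝ)
    (hK : K = Matrix.fromBlocks S (Matrix.of fun i (_ : Fin 1) => Uᵀ.mulVec ρ i)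
      0 (Matrix.of fun (_ : Fin 1) (_ : Fin 1) => s))
    (Uc Sc Vc : Matrix (Fin r ⊕ Fin 1) (Fin r ⊕ Fin 1) ℝ)
    (hUc : Ucᵀ * Uc = 1) (hVc : Vcᵀ * Vc = 1)
    (hKsvd : K = Uc * Sc * Vcᵀ)
    (Uhat : Matrix (Fin n) (Fin r ⊕ Fin 1) ℝ)
    (hUhat : Uhat = (Matrix.of fun i => Sum.elim (U i) (fun _ : Fin 1 => q i)) * Uc)
    (Vhat : Matrix (Fin m ⊕ Fin 1) (Fin r ⊕ Fin 1) ℝ)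
    (hVhat : Vhat = Matrix.fromBlocks V 0 0 1 * Vc) :
    Uhatᵀ * Uhat = 1 ∧ Vhatᵀ * Vhat = 1 ∧
      (Matrix.of fun i => Sum.elim (R i) (fun _ : Fin 1 => ρ i)) = Uhat * Sc * Vhatᵀ := by
  have hs' : s = √(p ⬝ᵥ p) := by simp only [hs, dotProduct, sq]
  have hs0 : s ≠ 0 := hs' ▸ (Real.sqrt_pos.mpr (dotProduct_self_pos hp0)).ne'
  set C := replicateCol (Fin 1) q
  replace hUhat : Uhat = fromCols U C * Uc := hUhat
  -- the frozen `fromBlocks V 0 0 1 * Vc` elaborates with `CStarMatrix`'s multiplication instance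
  replace hVhat : Vhat = fromBlocks V 0 0 (1 : Matrix (Fin 1) (Fin 1) ℝ) * Vc := hVhat
  have hUC : Uᵀ * C = 0 := by
    rw [← replicateCol_mulVec, hq, hp, mulVec_smul, mulVec_mulVec,
      HasOrthonormalCols.transpose_mul_one_sub_mul_transpose hU, zero_mulVec, smul_zero,
      replicateCol_zero]
  have hC : HasOrthonormalCols C := (hasOrthonormalCols_replicateCol_iff (v := q)).mpr <| by
    rw [hq, hs']
    exact inv_sqrt_smul_dotProduct_self hp0
  have hW : HasOrthonormalCols (fromCols U C) := HasOrthonormalCols.fromCols hU hC hUC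
  have hB : HasOrthonormalCols (fromBlocks V 0 0 (1 : Matrix (Fin 1) (Fin 1) ℝ)) :=
    HasOrthonormalCols.fromBlocks hV hasOrthonormalCols_one
  have hWK : fromCols U C * K = fromCols (U * S) (replicateCol (Fin 1) ρ) := by
    rw [hK]
    exact fromCols_replicateCol_mul_fromBlocks_eq_fromCols U S
      (by rw [hq, smul_inv_smul₀ hs0, hp])
  refine ⟨hUhat ▸ hW.mul hUc, hVhat ▸ hB.mul hVc, ?_⟩
  calc (of fun i => Sum.elim (R i) fun _ => ρ i)
      = fromCols (U * S) (replicateCol (Fin 1) ρ) *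
          (fromBlocks V 0 0 (1 : Matrix (Fin 1) (Fin 1) ℝ))ᵀ := by
        rw [fromCols_mul_fromBlocks_one_transpose, hR]
        rfl
    _ = Uhat * Sc * Vhatᵀ := by
        rw [← hWK, hKsvd, hUhat, hVhat, Matrix.transpose_mul]
        simp only [Matrix.mul_assoc]
end
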